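/- Let A and B be C*-algebras and let f : A → B be a mapping with f(0) = 0 for which there exists a function φ : A × A × A → [0,∞) such that (i) Σ_{i=1}^{∞} 3^{−i} φ(3^i a, 3^i b, 3^i c) < ∞ for all a, b, c ∈ A, (ii) lim_{n→∞} 3^{−2n} φ(3^n a, 3^n b, 3^n c) = 0 for all a, b, c ∈ A, (iii) ‖f(a*) − f(a)*‖ ≤ φ(a, a, a) for all a ∈ A, and (iv) ‖f((μb−a)/3) + f((a−3c)/3) + μ·f((3a−b)/3 + c) − f(a) + f(c²) − f(c)²‖ ≤ φ(a, b, c) for all a, b, c ∈ A and all μ ∈ 𝕋¹. Then there exists a unique Jordan *-homomorphism h : A → B such that ‖h(a) − f(a)‖ ≤ Σ_{i=1}^{∞} 3^{−i} φ(3^i a, 2·3^i a, 0) for all a ∈ A. -/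

import Mathlib

/-!
Hyers' direct method. Taking `μ = 1`, `c = 0` and `(a, b) = (3y, 6y)` in the functional
inequality gives `‖3 f(y) - f(3y)‖ ≤ φ(3y, 6y, 0)`, so `h(x) = lim 3⁻ⁿ f(3ⁿx)` exists, with the
stated distance to `f`, and any two linear maps within that distance of `f` coincide. With
`c = 0` the limit `h` satisfies the functional equation exactly; this makes it additive and
`𝕋¹`-homogeneous, hence `ℂ`-linear, since every complex number is a natural multiple of a sum
of two unimodular ones. Taking `a = b = 0` and scaling `c` by `3ⁿ`, the defect of the squares
is divided by `9ⁿ`, which gives `h(c²) = h(c)²`; the involution passes to the limit in the same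
way.
-/

open Filter Topology ComplexConjugate

lemma eq_zero_of_tendsto_of_norm_le {F : Type*} [NormedAddCommGroup F] {s : ℕ → F} {L : F}
    {ε : ℕ → ℝ} (hs : Tendsto s atTop (𝓝 L)) (hε : Tendsto ε atTop (𝓝 0))
    (hle : ∀ n, ‖s n‖ ≤ ε n) : L = 0 :=
  tendsto_nhds_unique hs (squeeze_zero_norm hle hε)

section Hyers

variable {𝕜 E F : Type*} [NormedField 𝕜] [AddCommGroup E] [Module 𝕜 E]
  [NormedAddCommGroup F] [NormedSpace 𝕜 F]

def hyersSeq (q : 𝕜) (f : E → F) (x : E) (n : ℕ) : F := (q ^ n)⁻¹ • f (q ^ n • x)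

noncomputable def hyersBound (q : 𝕜) (δ : E → ℝ) (x : E) : ℝ :=
  ∑' i : ℕ, (‖q‖ ^ (i + 1))⁻¹ * δ (q ^ (i + 1) • x)

variable {q : 𝕜} {f : E → F} {δ : E → ℝ}

lemma dist_hyersSeq_succ_le (hq : q ≠ 0) (hδ : ∀ y, ‖q • f y - f (q • y)‖ ≤ δ (q • y))
    (x : E) (n : ℕ) :
    dist (hyersSeq q f x n) (hyersSeq q f x (n + 1)) ≤
      (‖q‖ ^ (n + 1))⁻¹ * δ (q ^ (n + 1) • x) := by
  have hsucc : q ^ (n + 1) • x = q • q ^ n • x := by rw [pow_succ', mul_smul]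
  have hdiff : hyersSeq q f x n - hyersSeq q f x (n + 1) =
      (q ^ (n + 1))⁻¹ • (q • f (q ^ n • x) - f (q • q ^ n • x)) := by
    have hinv : (q ^ (n + 1))⁻¹ * q = (q ^ n)⁻¹ := by
      rw [pow_succ, mul_inv, mul_assoc, inv_mul_cancel₀ hq, mul_one]
    rw [smul_sub, smul_smul, hinv, hyersSeq, hyersSeq, hsucc]
  rw [dist_eq_norm, hdiff, norm_smul, norm_inv, norm_pow, hsucc]
  gcongr
  exact hδ _

lemma tendsto_inv_norm_pow_mul_hyersBound (x : E) :
    Tendsto (fun n : ℕ => (‖q‖ ^ n)⁻¹ * hyersBound q δ (q ^ n • x)) atTop (𝓝 0) := by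
  have htail : ∀ n : ℕ, (‖q‖ ^ n)⁻¹ * hyersBound q δ (q ^ n • x) =
      ∑' i : ℕ, (‖q‖ ^ (i + 1 + n))⁻¹ * δ (q ^ (i + 1 + n) • x) := by
    intro n
    rw [hyersBound, ← tsum_mul_left]
    congr! 2 with i
    rw [smul_smul, ← pow_add]
    ring
  simp_rw [htail, add_right_comm _ 1]
  exact tendsto_sum_nat_add fun i => (‖q‖ ^ (i + 1))⁻¹ * δ (q ^ (i + 1) • x)

lemma IsLinearMap.eq_of_norm_sub_le_of_tendsto (hq : q ≠ 0) {g g' : E → F}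
    (hg : IsLinearMap 𝕜 g) (hg' : IsLinearMap 𝕜 g') {S : E → ℝ}
    (hgf : ∀ y, ‖g y - f y‖ ≤ S y) (hg'f : ∀ y, ‖g' y - f y‖ ≤ S y) {x : E}
    (hS : Tendsto (fun n : ℕ => (‖q‖ ^ n)⁻¹ * S (q ^ n • x)) atTop (𝓝 0)) :
    g x = g' x := by
  have hle : ∀ n : ℕ, ‖g x - g' x‖ ≤ 2 * ((‖q‖ ^ n)⁻¹ * S (q ^ n • x)) := by
    intro n
    have hscale : g x - g' x = (q ^ n)⁻¹ • ((g (q ^ n • x) - f (q ^ n • x)) -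
        (g' (q ^ n • x) - f (q ^ n • x))) := by
      rw [sub_sub_sub_cancel_right, hg.map_smul, hg'.map_smul, ← smul_sub, smul_smul,
        inv_mul_cancel₀ (pow_ne_zero n hq), one_smul]
    rw [hscale, norm_smul, norm_inv, norm_pow]
    calc (‖q‖ ^ n)⁻¹ * ‖(g (q ^ n • x) - f (q ^ n • x)) - (g' (q ^ n • x) - f (q ^ n • x))‖
        ≤ (‖q‖ ^ n)⁻¹ * (S (q ^ n • x) + S (q ^ n • x)) := by
          gcongr
          exact (norm_sub_le _ _).trans (add_le_add (hgf _) (hg'f _))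
      _ = 2 * ((‖q‖ ^ n)⁻¹ * S (q ^ n • x)) := by ring
  have hzero := ge_of_tendsto' (by simpa using hS.const_mul 2) hle
  exact sub_eq_zero.mp (norm_le_zero_iff.mp hzero)

variable [CompleteSpace F]

noncomputable def hyersLimit (q : 𝕜) (f : E → F) (x : E) : F :=
  limUnder atTop (hyersSeq q f x)

lemma tendsto_hyersSeq (hq : q ≠ 0) (hδ : ∀ y, ‖q • f y - f (q • y)‖ ≤ δ (q • y)) {x : E}
    (hsum : Summable fun i : ℕ => (‖q‖ ^ (i + 1))⁻¹ * δ (q ^ (i + 1) • x)) :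
    Tendsto (hyersSeq q f x) atTop (𝓝 (hyersLimit q f x)) :=
  (cauchySeq_of_dist_le_of_summable _ (dist_hyersSeq_succ_le hq hδ x) hsum).tendsto_limUnder

lemma norm_hyersLimit_sub_le (hq : q ≠ 0) (hδ : ∀ y, ‖q • f y - f (q • y)‖ ≤ δ (q • y))
    {x : E} (hsum : Summable fun i : ℕ => (‖q‖ ^ (i + 1))⁻¹ * δ (q ^ (i + 1) • x)) :
    ‖hyersLimit q f x - f x‖ ≤ hyersBound q δ x := by
  have := dist_le_tsum_of_dist_le_of_tendsto₀ _ (dist_hyersSeq_succ_le hq hδ x) hsum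
    (tendsto_hyersSeq hq hδ hsum)
  rwa [hyersSeq, pow_zero, inv_one, one_smul, one_smul, dist_comm, dist_eq_norm] at this

end Hyers

lemma map_sq_of_tendsto_hyersSeq {𝕜 A B : Type*} [NormedField 𝕜] [Ring A] [Algebra 𝕜 A]
    [NormedRing B] [NormedAlgebra 𝕜 B] {q : 𝕜} (hq : 1 < ‖q‖) {f h : A → B}
    (hh : ∀ x, Tendsto (hyersSeq q f x) atTop (𝓝 (h x))) {ψ : A → ℝ}
    (hψ : ∀ c, ‖f (-c) + f c + f (c ^ 2) - f c ^ 2‖ ≤ ψ c) {c : A}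
    (hψlim : Tendsto (fun n : ℕ => (‖q‖ ^ (2 * n))⁻¹ * ψ (q ^ n • c)) atTop (𝓝 0)) :
    h (c ^ 2) = h c ^ 2 := by
  set u := hyersSeq q f
  have hinv : Tendsto (fun n : ℕ => (q ^ n)⁻¹) atTop (𝓝 0) := by
    have hq' : ‖q⁻¹‖ < 1 := by rw [norm_inv]; exact inv_lt_one_of_one_lt₀ hq
    simpa only [inv_pow] using tendsto_pow_atTop_nhds_zero_of_norm_lt_one hq'
  have hdiag : Tendsto (fun n : ℕ => u (c ^ 2) (2 * n)) atTop (𝓝 (h (c ^ 2))) :=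
    (hh _).comp (tendsto_id.const_mul_atTop' two_pos)
  have hlim := ((hinv.smul ((hh (-c)).add (hh c))).add hdiag).sub ((hh c).pow 2)
  rw [zero_smul, zero_add] at hlim
  refine sub_eq_zero.mp (eq_zero_of_tendsto_of_norm_le hlim hψlim fun n => ?_)
  have hscaled : (q ^ n)⁻¹ • (u (-c) n + u c n) + u (c ^ 2) (2 * n) - u c n ^ 2 =
      (q ^ (2 * n))⁻¹ • (f (-(q ^ n • c)) + f (q ^ n • c) + f ((q ^ n • c) ^ 2)
        - f (q ^ n • c) ^ 2) := by
    simp only [u, hyersSeq, smul_neg, smul_pow, ← inv_pow, ← pow_mul, mul_comm n 2]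
    module
  rw [hscaled, norm_smul, norm_inv, norm_pow]
  gcongr
  exact hψ _

lemma map_star_of_tendsto_hyersSeq {𝕜 A B : Type*} [NormedField 𝕜] [StarRing 𝕜]
    [AddCommGroup A] [Module 𝕜 A] [Star A] [StarModule 𝕜 A]
    [NormedAddCommGroup B] [NormedSpace 𝕜 B] [StarAddMonoid B] [StarModule 𝕜 B]
    [ContinuousStar B] {q : 𝕜} (hq : IsSelfAdjoint q) {f h : A → B}
    (hh : ∀ x, Tendsto (hyersSeq q f x) atTop (𝓝 (h x))) {ψ : A → ℝ}
    (hψ : ∀ a, ‖f (star a) - star (f a)‖ ≤ ψ a) {a : A}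
    (hψlim : Tendsto (fun n : ℕ => (‖q‖ ^ n)⁻¹ * ψ (q ^ n • a)) atTop (𝓝 0)) :
    h (star a) = star (h a) := by
  refine sub_eq_zero.mp (eq_zero_of_tendsto_of_norm_le ((hh _).sub (hh a).star) hψlim
    fun n => ?_)
  have hscaled : hyersSeq q f (star a) n - star (hyersSeq q f a n) =
      (q ^ n)⁻¹ • (f (star (q ^ n • a)) - star (f (q ^ n • a))) := by
    rw [hyersSeq, hyersSeq, star_smul, star_smul, star_inv₀, (hq.pow n).star_eq, smul_sub]
  rw [hscaled, norm_smul, norm_inv, norm_pow]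
  gcongr
  exact hψ _

lemma Complex.exists_norm_eq_one_add_eq {w : ℂ} (hw : ‖w‖ ≤ 2) :
    ∃ μ ν : ℂ, ‖μ‖ = 1 ∧ ‖ν‖ = 1 ∧ μ + ν = w := by
  obtain rfl | hw0 := eq_or_ne w 0
  · exact ⟨1, -1, by simp, by simp, by ring⟩
  -- `w = ζ (κ + conj κ)` with `ζ = w / ‖w‖` and `κ` the unit number of real part `‖w‖ / 2`.
  set t : ℝ := ‖w‖ / 2
  have ht : t ^ 2 ≤ 1 := by
    have h0 : 0 ≤ t := by positivity
    have h1 : t ≤ 1 := by simp only [t]; linarith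
    nlinarith
  set κ : ℂ := ⟨t, √(1 - t ^ 2)⟩
  have hκ : ‖κ‖ = 1 := by
    rw [Complex.norm_def, Complex.normSq_mk, ← sq, ← sq, Real.sq_sqrt (by linarith)]
    simp
  have hζ : ‖w / (‖w‖ : ℂ)‖ = 1 := by
    rw [norm_div, Complex.norm_real, norm_norm, div_self (norm_ne_zero_iff.mpr hw0)]
  refine ⟨w / ‖w‖ * κ, w / ‖w‖ * conj κ, by rw [norm_mul, hζ, hκ, one_mul],
    by rw [norm_mul, hζ, RCLike.norm_conj, hκ, one_mul], ?_⟩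
  rw [← mul_add, Complex.add_conj]
  have : (‖w‖ : ℂ) ≠ 0 := by exact_mod_cast norm_ne_zero_iff.mpr hw0
  simp only [κ, t]
  push_cast
  field_simp

section Jensen

variable {E F : Type*} [AddCommGroup E] [Module ℂ E]

lemma isLinearMap_of_map_add_of_map_unit_smul [AddCommGroup F] [Module ℂ F] {g : E → F}
    (hadd : ∀ x y, g (x + y) = g x + g y)
    (hunit : ∀ μ : ℂ, ‖μ‖ = 1 → ∀ x, g (μ • x) = μ • g x) : IsLinearMap ℂ g := by
  refine ⟨hadd, fun c x => ?_⟩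
  let G : E →+ F := AddMonoidHom.mk' g hadd
  obtain ⟨n, hn⟩ := exists_nat_gt (‖c‖ / 2)
  have hnpos : (0 : ℝ) < n := lt_of_le_of_lt (by positivity) hn
  have hn0 : (n : ℂ) ≠ 0 := by exact_mod_cast hnpos.ne'
  obtain ⟨μ, ν, hμ, hν, hμν⟩ := Complex.exists_norm_eq_one_add_eq (w := c / n) (by
    rw [norm_div, Complex.norm_natCast, div_le_iff₀ hnpos]
    linarith)
  have hc : c = n * μ + n * ν := by rw [← mul_add, hμν, mul_div_cancel₀ _ hn0]
  calc g (c • x) = G (n • (μ • x) + n • (ν • x)) := by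
        rw [hc, add_smul, mul_smul, mul_smul, Nat.cast_smul_eq_nsmul, Nat.cast_smul_eq_nsmul]
        rfl
    _ = n • (μ • g x) + n • (ν • g x) := by
        rw [map_add, map_nsmul, map_nsmul]
        simp only [G, AddMonoidHom.mk'_apply, hunit μ hμ, hunit ν hν]
    _ = c • g x := by
        rw [hc, add_smul, mul_smul, mul_smul, Nat.cast_smul_eq_nsmul, Nat.cast_smul_eq_nsmul]

/-- The left-hand side of the paper's functional equation with `c = 0`. -/
noncomputable def jensenDefect [AddCommGroup F] [Module ℂ F] (g : E → F) (μ : ℂ) (a b : E) : F :=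
  g ((3 : ℂ)⁻¹ • (μ • b - a)) + g ((3 : ℂ)⁻¹ • a) + μ • g ((3 : ℂ)⁻¹ • ((3 : ℂ) • a - b)) - g a

def JensenEquation [AddCommGroup F] [Module ℂ F] (g : E → F) : Prop :=
  ∀ μ : ℂ, ‖μ‖ = 1 → ∀ a b : E, jensenDefect g μ a b = 0

namespace JensenEquation

variable [AddCommGroup F] [Module ℂ F] {g : E → F}

lemma map_zero (hg : JensenEquation g) : g 0 = 0 := by
  have h := hg 1 (by simp) 0 0
  simp only [jensenDefect, smul_zero, sub_zero, one_smul] at h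
  have h2 : (2 : ℂ) • g 0 = 0 := by linear_combination (norm := module) h
  exact (smul_eq_zero.mp h2).resolve_left two_ne_zero

lemma map_neg (hg : JensenEquation g) (x : E) : g (-x) = -g x := by
  have h := hg 1 (by simp) 0 ((3 : ℂ) • x)
  rw [jensenDefect, show (3 : ℂ)⁻¹ • ((1 : ℂ) • (3 : ℂ) • x - 0) = x by module,
    show (3 : ℂ)⁻¹ • ((3 : ℂ) • (0 : E) - (3 : ℂ) • x) = -x by module,
    smul_zero, hg.map_zero, one_smul] at h
  linear_combination (norm := module) h

lemma map_add (hg : JensenEquation g) (x y : E) : g (x + y) = g x + g y := by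
  have hsum : ∀ x y : E, g x + g y + g ((2 : ℂ)⁻¹ • (x + y)) = g ((3 / 2 : ℂ) • (x + y)) := by
    intro x y
    have h := hg 1 (by simp) ((3 / 2 : ℂ) • (x + y)) ((3 / 2 : ℂ) • (x + y) + (3 : ℂ) • x)
    rw [jensenDefect,
      show (3 : ℂ)⁻¹ • ((1 : ℂ) • ((3 / 2 : ℂ) • (x + y) + (3 : ℂ) • x) - (3 / 2 : ℂ) • (x + y))
        = x by module,
      show (3 : ℂ)⁻¹ • (3 / 2 : ℂ) • (x + y) = (2 : ℂ)⁻¹ • (x + y) by module,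
      show (3 : ℂ)⁻¹ • ((3 : ℂ) • (3 / 2 : ℂ) • (x + y) - ((3 / 2 : ℂ) • (x + y) + (3 : ℂ) • x))
        = y by module, one_smul] at h
    linear_combination (norm := module) h
  have hsum0 := hsum (x + y) 0
  rw [add_zero, hg.map_zero, add_zero] at hsum0
  linear_combination (norm := module) hsum0 - hsum x y

lemma map_unit_smul (hg : JensenEquation g) {μ : ℂ} (hμ : ‖μ‖ = 1) (x : E) :
    g (μ • x) = μ • g x := by
  have h := hg μ hμ 0 ((3 : ℂ) • x)
  rw [jensenDefect, show (3 : ℂ)⁻¹ • (μ • (3 : ℂ) • x - 0) = μ • x by module,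
    show (3 : ℂ)⁻¹ • ((3 : ℂ) • (0 : E) - (3 : ℂ) • x) = -x by module,
    smul_zero, hg.map_zero, hg.map_neg] at h
  linear_combination (norm := module) h

lemma isLinearMap (hg : JensenEquation g) : IsLinearMap ℂ g :=
  isLinearMap_of_map_add_of_map_unit_smul hg.map_add fun _ hμ => hg.map_unit_smul hμ

end JensenEquation

variable [NormedAddCommGroup F] [NormedSpace ℂ F] {f : E → F} {ψ : E → E → ℝ}

lemma norm_three_smul_sub_le (hψ : ∀ a b : E, ‖jensenDefect f 1 a b‖ ≤ ψ a b) (y : E) :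
    ‖(3 : ℂ) • f y - f ((3 : ℂ) • y)‖ ≤ ψ ((3 : ℂ) • y) ((2 : ℂ) • (3 : ℂ) • y) := by
  have h := hψ ((3 : ℂ) • y) ((2 : ℂ) • (3 : ℂ) • y)
  rwa [jensenDefect, show (3 : ℂ)⁻¹ • ((1 : ℂ) • (2 : ℂ) • (3 : ℂ) • y - (3 : ℂ) • y) = y by module,
    show (3 : ℂ)⁻¹ • (3 : ℂ) • y = y by module,
    show (3 : ℂ)⁻¹ • ((3 : ℂ) • (3 : ℂ) • y - (2 : ℂ) • (3 : ℂ) • y) = y by module, one_smul,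
    show f y + f y + f y = (3 : ℂ) • f y by module] at h

lemma jensenDefect_hyersSeq (μ : ℂ) (a b : E) (n : ℕ) :
    jensenDefect (hyersSeq (3 : ℂ) f · n) μ a b =
      ((3 : ℂ) ^ n)⁻¹ • jensenDefect f μ ((3 : ℂ) ^ n • a) ((3 : ℂ) ^ n • b) := by
  rw [jensenDefect, jensenDefect,
    show (3 : ℂ)⁻¹ • (μ • (3 : ℂ) ^ n • b - (3 : ℂ) ^ n • a)
      = (3 : ℂ) ^ n • (3 : ℂ)⁻¹ • (μ • b - a) by module,
    show (3 : ℂ)⁻¹ • (3 : ℂ) ^ n • a = (3 : ℂ) ^ n • (3 : ℂ)⁻¹ • a by module,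
    show (3 : ℂ)⁻¹ • ((3 : ℂ) • (3 : ℂ) ^ n • a - (3 : ℂ) ^ n • b)
      = (3 : ℂ) ^ n • (3 : ℂ)⁻¹ • ((3 : ℂ) • a - b) by module]
  simp only [hyersSeq]
  module

lemma jensenEquation_of_tendsto_hyersSeq {h : E → F}
    (hh : ∀ x, Tendsto (hyersSeq (3 : ℂ) f x) atTop (𝓝 (h x)))
    (hψ : ∀ μ : ℂ, ‖μ‖ = 1 → ∀ a b : E, ‖jensenDefect f μ a b‖ ≤ ψ a b)
    (hψlim : ∀ a b : E, Tendsto (fun n : ℕ => (3 ^ n : ℝ)⁻¹ * ψ ((3 : ℂ) ^ n • a)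
      ((3 : ℂ) ^ n • b)) atTop (𝓝 0)) :
    JensenEquation h := by
  intro μ hμ a b
  refine eq_zero_of_tendsto_of_norm_le (s := fun n => jensenDefect (hyersSeq 3 f · n) μ a b)
    ((((hh _).add (hh _)).add ((hh _).const_smul μ)).sub (hh a)) (hψlim a b) fun n => ?_
  rw [jensenDefect_hyersSeq, norm_smul, norm_inv, norm_pow, Complex.norm_ofNat]
  gcongr
  exact hψ μ hμ _ _

end Jensen

theorem stmt_7_general
    {A B : Type*}
    [NormedRing A] [StarRing A] [NormedAlgebra ℂ A] [StarModule ℂ A]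
    [NormedRing B] [StarRing B] [CStarRing B] [NormedAlgebra ℂ B] [StarModule ℂ B]
    [CompleteSpace B]
    (f : A → B) (hf0 : f 0 = 0)
    (φ : A → A → A → ℝ)
    (hsum : ∀ a b c : A, Summable (fun i : ℕ =>
      ((3:ℝ)^(i+1))⁻¹ * φ ((3:ℂ)^(i+1) • a) ((3:ℂ)^(i+1) • b) ((3:ℂ)^(i+1) • c)))
    (hlim : ∀ a b c : A, Tendsto (fun n : ℕ =>
      ((3:ℝ)^(2*n))⁻¹ * φ ((3:ℂ)^n • a) ((3:ℂ)^n • b) ((3:ℂ)^n • c))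
      atTop (nhds 0))
    (hstar : ∀ a : A, ‖f (star a) - star (f a)‖ ≤ φ a a a)
    (hineq : ∀ μ : ℂ, ‖μ‖ = 1 → ∀ a b c : A,
      ‖f ((3:ℂ)⁻¹ • (μ • b - a)) + f ((3:ℂ)⁻¹ • (a - (3:ℂ) • c)) +
        μ • f ((3:ℂ)⁻¹ • ((3:ℂ) • a - b) + c) - f a + f (c ^ 2) - (f c) ^ 2‖
        ≤ φ a b c) :
    ∃! h : A → B,
      (IsLinearMap ℂ h ∧ (∀ a : A, h (a ^ 2) = (h a) ^ 2) ∧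
        (∀ a : A, h (star a) = star (h a))) ∧
      ∀ a : A, ‖h a - f a‖ ≤
        ∑' i : ℕ, ((3:ℝ)^(i+1))⁻¹ *
          φ ((3:ℂ)^(i+1) • a) ((2:ℂ) • ((3:ℂ)^(i+1) • a)) 0 := by
  set δ : A → ℝ := fun y => φ y ((2:ℂ) • y) 0
  have hdefect : ∀ μ : ℂ, ‖μ‖ = 1 → ∀ a b : A, ‖jensenDefect f μ a b‖ ≤ φ a b 0 :=
    fun μ hμ a b => by simpa [jensenDefect, hf0] using hineq μ hμ a b 0
  have hstep : ∀ y, ‖(3:ℂ) • f y - f ((3:ℂ) • y)‖ ≤ δ ((3:ℂ) • y) :=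
    norm_three_smul_sub_le (hdefect 1 (by simp))
  have hsumδ : ∀ x, Summable fun i : ℕ => (‖(3:ℂ)‖ ^ (i + 1))⁻¹ * δ ((3:ℂ) ^ (i + 1) • x) :=
    fun x => by simpa [δ, smul_comm _ (2:ℂ)] using hsum x ((2:ℂ) • x) 0
  have hdecay : ∀ a b c : A, Tendsto (fun n : ℕ =>
      ((3:ℝ)^n)⁻¹ * φ ((3:ℂ)^n • a) ((3:ℂ)^n • b) ((3:ℂ)^n • c)) atTop (𝓝 0) :=
    fun a b c => (tendsto_add_atTop_iff_nat 1).mp (hsum a b c).tendsto_atTop_zero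
  have hh : ∀ x, Tendsto (hyersSeq (3:ℂ) f x) atTop (𝓝 (hyersLimit (3:ℂ) f x)) :=
    fun x => tendsto_hyersSeq three_ne_zero hstep (hsumδ x)
  have hbound : ∀ x, ‖hyersLimit (3:ℂ) f x - f x‖ ≤ hyersBound (3:ℂ) δ x :=
    fun x => norm_hyersLimit_sub_le three_ne_zero hstep (hsumδ x)
  have hlin : IsLinearMap ℂ (hyersLimit (3:ℂ) f) :=
    (jensenEquation_of_tendsto_hyersSeq hh hdefect fun a b => by
      simpa using hdecay a b 0).isLinearMap
  have hsq : ∀ c, hyersLimit (3:ℂ) f (c ^ 2) = hyersLimit (3:ℂ) f c ^ 2 := fun c =>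
    map_sq_of_tendsto_hyersSeq (by norm_num) hh
      (fun c => by simpa [hf0] using hineq 1 (by simp) 0 0 c) (by simpa using hlim 0 0 c)
  have hstar' : ∀ a, hyersLimit (3:ℂ) f (star a) = star (hyersLimit (3:ℂ) f a) := fun a =>
    map_star_of_tendsto_hyersSeq (.ofNat 3) hh hstar (by simpa using hdecay a a a)
  refine ⟨hyersLimit (3:ℂ) f, ⟨⟨hlin, hsq, hstar'⟩, fun a => by simpa [hyersBound] using hbound a⟩,
    ?_⟩
  rintro h' ⟨⟨hlin', -, -⟩, hb'⟩
  funext x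
  exact (hlin.eq_of_norm_sub_le_of_tendsto three_ne_zero hlin' hbound
    (by simpa [hyersBound] using hb') (tendsto_inv_norm_pow_mul_hyersBound x)).symm

/-- Generalized Hyers–Ulam stability of Jordan *-homomorphisms (expansion direction). -/
theorem stmt_7
    {A B : Type*}
    [NormedRing A] [StarRing A] [CStarRing A] [NormedAlgebra ℂ A] [StarModule ℂ A]
    [CompleteSpace A]
    [NormedRing B] [StarRing B] [CStarRing B] [NormedAlgebra ℂ B] [StarModule ℂ B]
    [CompleteSpace B]
    (f : A → B) (hf0 : f 0 = 0)
    (φ : A → A → A → ℝ) (hφ : ∀ a b c : A, 0 ≤ φ a b c)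
    (hsum : ∀ a b c : A, Summable (fun i : ℕ =>
      ((3:ℝ)^(i+1))⁻¹ * φ ((3:ℂ)^(i+1) • a) ((3:ℂ)^(i+1) • b) ((3:ℂ)^(i+1) • c)))
    (hlim : ∀ a b c : A, Tendsto (fun n : ℕ =>
      ((3:ℝ)^(2*n))⁻¹ * φ ((3:ℂ)^n • a) ((3:ℂ)^n • b) ((3:ℂ)^n • c))
      atTop (nhds 0))
    (hstar : ∀ a : A, ‖f (star a) - star (f a)‖ ≤ φ a a a)
    (hineq : ∀ μ : ℂ, ‖μ‖ = 1 → ∀ a b c : A,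
      ‖f ((3:ℂ)⁻¹ • (μ • b - a)) + f ((3:ℂ)⁻¹ • (a - (3:ℂ) • c)) +
        μ • f ((3:ℂ)⁻¹ • ((3:ℂ) • a - b) + c) - f a + f (c ^ 2) - (f c) ^ 2‖
        ≤ φ a b c) :
    ∃! h : A → B,
      (IsLinearMap ℂ h ∧ (∀ a : A, h (a ^ 2) = (h a) ^ 2) ∧
        (∀ a : A, h (star a) = star (h a))) ∧
      ∀ a : A, ‖h a - f a‖ ≤
        ∑' i : ℕ, ((3:ℝ)^(i+1))⁻¹ *
          φ ((3:ℂ)^(i+1) • a) ((2:ℂ) • ((3:ℂ)^(i+1) • a)) 0 :=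
  stmt_7_general f hf0 φ hsum hlim hstar hineq
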